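/- Let g : S^{3×3} × S^{3×3} → ℝ be convex and h : ℝ → ℝ be such that g(ε, cof ε) = h(det ε) for all ε ∈ S^{3×3}. Then h is constant. -/
import Mathlib


open Matrix

/-- The symmetric part `(F + Fᵀ)/2` of a 3×3 matrix. -/
noncomputable def symPart (F : Matrix (Fin 3) (Fin 3) ℝ) : Matrix (Fin 3) (Fin 3) ℝ :=
  (1 / 2 : ℝ) • (F + Fᵀ)

/-- The cofactor matrix: `(cof F)_{ij} = (-1)^{i+j}` times the determinant of the 2×2
matrix obtained from `F` by deleting row `i` and column `j`. -/
noncomputable def cof (F : Matrix (Fin 3) (Fin 3) ℝ) : Matrix (Fin 3) (Fin 3) ℝ :=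
  Matrix.of fun i j =>
    (-1 : ℝ) ^ ((i : ℕ) + (j : ℕ)) * (F.submatrix i.succAbove j.succAbove).det

/-- Frobenius inner product `A:B = Σ_{i,j} A_{ij} B_{ij}` of 3×3 matrices. -/
def mdot (A B : Matrix (Fin 3) (Fin 3) ℝ) : ℝ := ∑ i, ∑ j, A i j * B i j

/-- A function `W : ℝ^{3×3} → ℝ` is polyconvex if there is a convex function
`G : ℝ^{3×3} × ℝ^{3×3} × ℝ → ℝ` with `W F = G (F, cof F, det F)` for all `F`. -/
def Polyconvex3 (W : Matrix (Fin 3) (Fin 3) ℝ → ℝ) : Prop :=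
  ∃ G : Matrix (Fin 3) (Fin 3) ℝ × Matrix (Fin 3) (Fin 3) ℝ × ℝ → ℝ,
    ConvexOn ℝ Set.univ G ∧ ∀ F : Matrix (Fin 3) (Fin 3) ℝ, W F = G (F, cof F, F.det)

/-- `f : S^{3×3} → ℝ` is symmetric polyconvex if `F ↦ f (Fˢ)` is polyconvex. -/
def SymPolyconvex3 (f : Matrix (Fin 3) (Fin 3) ℝ → ℝ) : Prop :=
  Polyconvex3 (fun F => f (symPart F))

/-- `B ∈ S^{3×3}` is negative semi-definite: `Bx·x ≤ 0` for all `x ∈ ℝ³`. -/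
def NegSemidefM (B : Matrix (Fin 3) (Fin 3) ℝ) : Prop :=
  ∀ x : Fin 3 → ℝ, B.mulVec x ⬝ᵥ x ≤ 0

/-- `A ∈ S^{3×3}` is positive semi-definite: `Ax·x ≥ 0` for all `x ∈ ℝ³`. -/
def PosSemidefM (A : Matrix (Fin 3) (Fin 3) ℝ) : Prop :=
  ∀ x : Fin 3 → ℝ, 0 ≤ A.mulVec x ⬝ᵥ x

/-- The symmetrized tensor product `a ⊙ b = (a⊗b + b⊗a)/2`. -/
noncomputable def symProd (a b : Fin 3 → ℝ) : Matrix (Fin 3) (Fin 3) ℝ :=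
  (1 / 2 : ℝ) • (vecMulVec a b + vecMulVec b a)

/-- `f : S^{3×3} → ℝ` is symmetric rank-one convex if `t ↦ f (ε + t a⊙b)` is convex
for every symmetric `ε` and all `a, b ∈ ℝ³`. -/
def SymRankOneConvex3 (f : Matrix (Fin 3) (Fin 3) ℝ → ℝ) : Prop :=
  ∀ ε : Matrix (Fin 3) (Fin 3) ℝ, ε.IsSymm → ∀ a b : Fin 3 → ℝ,
    ConvexOn ℝ Set.univ (fun t : ℝ => f (ε + t • symProd a b))


lemma cof_diagonal' (v : Fin 3 → ℝ) :
    cof (Matrix.diagonal v) = Matrix.diagonal ![v 1 * v 2, v 0 * v 2, v 0 * v 1] := by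
  ext i j
  fin_cases i <;> fin_cases j <;>
    simp [cof, Matrix.det_fin_two, Matrix.diagonal, Fin.succAbove] <;> ring

lemma exists_cube_root' : ∀ s : ℝ, ∃ r : ℝ, r * r * r = s := by
  have base : ∀ s : ℝ, 0 ≤ s → ∃ r : ℝ, r * r * r = s := by
    intro s hs
    refine ⟨s ^ ((3:ℝ)⁻¹), ?_⟩
    have h1 : (s ^ ((3:ℝ)⁻¹)) ^ (3:ℕ) = s := by
      rw [← Real.rpow_natCast (s ^ ((3:ℝ)⁻¹)) 3, ← Real.rpow_mul hs]
      norm_num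
    calc s ^ ((3:ℝ)⁻¹) * s ^ ((3:ℝ)⁻¹) * s ^ ((3:ℝ)⁻¹)
        = (s ^ ((3:ℝ)⁻¹)) ^ (3:ℕ) := by ring
      _ = s := h1
  intro s
  rcases le_or_gt 0 s with hs | hs
  · exact base s hs
  · obtain ⟨r, hr⟩ := base (-s) (by linarith)
    exact ⟨-r, by linarith [hr]⟩

/-- If a convex function `g` on `S^{3×3} × S^{3×3}` satisfies
`g (ε, cof ε) = h (det ε)` for all symmetric `ε`, then `h` is constant. -/
theorem convex_g_cof_eq_h_det_3d (g : Matrix (Fin 3) (Fin 3) ℝ × Matrix (Fin 3) (Fin 3) ℝ → ℝ)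
    (hg : ConvexOn ℝ {p : Matrix (Fin 3) (Fin 3) ℝ × Matrix (Fin 3) (Fin 3) ℝ |
      p.1.IsSymm ∧ p.2.IsSymm} g)
    (h : ℝ → ℝ)
    (hgh : ∀ ε : Matrix (Fin 3) (Fin 3) ℝ, ε.IsSymm → g (ε, cof ε) = h ε.det) :
    ∀ s t : ℝ, h s = h t := by
  have hmem : ∀ v w : Fin 3 → ℝ,
      (Matrix.diagonal v, Matrix.diagonal w) ∈
        {p : Matrix (Fin 3) (Fin 3) ℝ × Matrix (Fin 3) (Fin 3) ℝ | p.1.IsSymm ∧ p.2.IsSymm} :=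
    fun v w => ⟨Matrix.isSymm_diagonal v, Matrix.isSymm_diagonal w⟩
  have hval : ∀ v w : Fin 3 → ℝ, ∀ x : ℝ,
      w = ![v 1 * v 2, v 0 * v 2, v 0 * v 1] → v 0 * v 1 * v 2 = x →
      g (Matrix.diagonal v, Matrix.diagonal w) = h x := by
    intro v w x hw hx
    subst hw; subst hx
    have h1 := hgh (Matrix.diagonal v) (Matrix.isSymm_diagonal v)
    rw [cof_diagonal', Matrix.det_diagonal, Fin.prod_univ_three] at h1
    exact h1
  have hcombm : ∀ (a b : ℝ) (v w : Fin 3 → ℝ),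
      a • Matrix.diagonal v + b • Matrix.diagonal w = Matrix.diagonal (a • v + b • w) := by
    intro a b v w
    rw [← Matrix.diagonal_smul, ← Matrix.diagonal_smul, Matrix.diagonal_add]
    rfl
  have step : ∀ (a b : ℝ), 0 ≤ a → 0 ≤ b → a + b = 1 → ∀ v w v' w' : Fin 3 → ℝ,
      g (Matrix.diagonal (a • v + b • v'), Matrix.diagonal (a • w + b • w')) ≤
        a * g (Matrix.diagonal v, Matrix.diagonal w)
          + b * g (Matrix.diagonal v', Matrix.diagonal w') := by
    intro a b ha hb hab v w v' w'
    have H := hg.2 (hmem v w) (hmem v' w') ha hb hab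
    simpa only [Prod.smul_mk, Prod.mk_add_mk, hcombm, smul_eq_mul] using H
  -- midpoint convexity of h
  have hconv : ∀ a b : ℝ, h ((a + b) / 2) ≤ (h a + h b) / 2 := by
    intro a b
    have H := step (1/2) (1/2) (by norm_num) (by norm_num) (by norm_num)
      ![a,1,1] ![1, a, a] ![b,1,1] ![1, b, b]
    have e1 : (1/2:ℝ) • ![a,1,1] + (1/2:ℝ) • ![b,1,1] = ![(a+b)/2, 1, 1] := by
      funext i; fin_cases i <;> simp <;> ring
    have e2 : (1/2:ℝ) • ![1, a, a] + (1/2:ℝ) • ![1, b, b] = ![1, (a+b)/2, (a+b)/2] := by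
      funext i; fin_cases i <;> simp <;> ring
    rw [e1, e2,
      hval ![(a+b)/2,1,1] ![1,(a+b)/2,(a+b)/2] ((a+b)/2) (by funext i; fin_cases i <;> simp) (by simp),
      hval ![a,1,1] ![1,a,a] a (by funext i; fin_cases i <;> simp) (by simp),
      hval ![b,1,1] ![1,b,b] b (by funext i; fin_cases i <;> simp) (by simp)] at H
    linarith
  -- six-point configuration: h is bounded above by h 0
  have key : ∀ c : ℝ,
      h (((3 + Real.sqrt 3)/3*c) * ((3 + Real.sqrt 3)/3*c) * ((3 + Real.sqrt 3)/3*c)) ≤ h 0 := by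
    intro c
    have hs3 : Real.sqrt 3 ^ 2 = 3 := Real.sq_sqrt (by norm_num)
    set s3 : ℝ := Real.sqrt 3 with hs3def
    set d : ℝ := (2 + s3) * c with hd
    set A : ℝ := (3 + s3)/3*c with hA
    have g1 : g (Matrix.diagonal ![0,c,c], Matrix.diagonal ![c*c,0,0]) = h 0 :=
      hval _ _ _ (by funext i; fin_cases i <;> simp) (by simp)
    have g1' : g (Matrix.diagonal ![0,d,d], Matrix.diagonal ![d*d,0,0]) = h 0 :=
      hval _ _ _ (by funext i; fin_cases i <;> simp) (by simp)
    have g2 : g (Matrix.diagonal ![c,0,c], Matrix.diagonal ![0,c*c,0]) = h 0 :=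
      hval _ _ _ (by funext i; fin_cases i <;> simp) (by simp)
    have g2' : g (Matrix.diagonal ![d,0,d], Matrix.diagonal ![0,d*d,0]) = h 0 :=
      hval _ _ _ (by funext i; fin_cases i <;> simp) (by simp)
    have g3 : g (Matrix.diagonal ![c,c,0], Matrix.diagonal ![0,0,c*c]) = h 0 :=
      hval _ _ _ (by funext i; fin_cases i <;> simp) (by simp)
    have g3' : g (Matrix.diagonal ![d,d,0], Matrix.diagonal ![0,0,d*d]) = h 0 :=
      hval _ _ _ (by funext i; fin_cases i <;> simp) (by simp)
    have half : (0:ℝ) ≤ 1/2 := by norm_num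
    have Q1 := step (1/2) (1/2) half half (by norm_num) ![0,c,c] ![c*c,0,0] ![0,d,d] ![d*d,0,0]
    have Q2 := step (1/2) (1/2) half half (by norm_num) ![c,0,c] ![0,c*c,0] ![d,0,d] ![0,d*d,0]
    have Q3 := step (1/2) (1/2) half half (by norm_num) ![c,c,0] ![0,0,c*c] ![d,d,0] ![0,0,d*d]
    rw [g1, g1'] at Q1; rw [g2, g2'] at Q2; rw [g3, g3'] at Q3
    have R := step (1/2) (1/2) half half (by norm_num)
      ((1/2:ℝ) • ![0,c,c] + (1/2:ℝ) • ![0,d,d]) ((1/2:ℝ) • ![c*c,0,0] + (1/2:ℝ) • ![d*d,0,0])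
      ((1/2:ℝ) • ![c,0,c] + (1/2:ℝ) • ![d,0,d]) ((1/2:ℝ) • ![0,c*c,0] + (1/2:ℝ) • ![0,d*d,0])
    have F := step (2/3) (1/3) (by norm_num) (by norm_num) (by norm_num)
      ((1/2:ℝ) • ((1/2:ℝ) • ![0,c,c] + (1/2:ℝ) • ![0,d,d])
        + (1/2:ℝ) • ((1/2:ℝ) • ![c,0,c] + (1/2:ℝ) • ![d,0,d]))
      ((1/2:ℝ) • ((1/2:ℝ) • ![c*c,0,0] + (1/2:ℝ) • ![d*d,0,0])
        + (1/2:ℝ) • ((1/2:ℝ) • ![0,c*c,0] + (1/2:ℝ) • ![0,d*d,0]))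
      ((1/2:ℝ) • ![c,c,0] + (1/2:ℝ) • ![d,d,0])
      ((1/2:ℝ) • ![0,0,c*c] + (1/2:ℝ) • ![0,0,d*d])
    have eV : (2/3:ℝ) • ((1/2:ℝ) • ((1/2:ℝ) • ![0,c,c] + (1/2:ℝ) • ![0,d,d])
          + (1/2:ℝ) • ((1/2:ℝ) • ![c,0,c] + (1/2:ℝ) • ![d,0,d]))
        + (1/3:ℝ) • ((1/2:ℝ) • ![c,c,0] + (1/2:ℝ) • ![d,d,0]) = ![A, A, A] := by
      funext i
      fin_cases i <;> simp <;> linear_combination (1/3)*hd - hA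
    have hAA : A * A = (c * c + d * d) / 6 := by
      rw [hA, hd]; linear_combination (-(c^2)/18) * hs3
    have eW : (2/3:ℝ) • ((1/2:ℝ) • ((1/2:ℝ) • ![c*c,0,0] + (1/2:ℝ) • ![d*d,0,0])
          + (1/2:ℝ) • ((1/2:ℝ) • ![0,c*c,0] + (1/2:ℝ) • ![0,d*d,0]))
        + (1/3:ℝ) • ((1/2:ℝ) • ![0,0,c*c] + (1/2:ℝ) • ![0,0,d*d])
        = ![A * A, A * A, A * A] := by
      funext i
      fin_cases i <;> simp <;> linear_combination -hAA
    rw [eV, eW,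
      hval ![A,A,A] ![A*A,A*A,A*A] (A*A*A) (by funext i; fin_cases i <;> simp) (by simp)] at F
    linarith
  have hbdd : ∀ s : ℝ, h s ≤ h 0 := by
    intro s
    obtain ⟨r, hr⟩ := exists_cube_root' s
    have hk : (0:ℝ) < (3 + Real.sqrt 3)/3 := by positivity
    have hc : (3 + Real.sqrt 3)/3 * (r / ((3 + Real.sqrt 3)/3)) = r := by
      field_simp
    have H := key (r / ((3 + Real.sqrt 3)/3))
    rw [hc, hr] at H
    exact H
  have hge : ∀ y : ℝ, h 0 ≤ h y := by
    intro y
    have H := hconv y (-y)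
    have e : (y + -y)/2 = 0 := by ring
    rw [e] at H
    linarith [hbdd (-y)]
  intro s t
  have := hbdd s; have := hge s; have := hbdd t; have := hge t
  linarith
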